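/- If f : ℝ → ℝ is locally Lipschitz and semiconvex, then its closed epigraph epi f := {(x, y) ∈ ℝ² : y ≥ f(x)} has positive reach: reach(epi f) > 0. -/

import Mathlib

/-!
Let `z` lie at distance `d < 1 / C` from the epigraph. The open disc of radius `d` about `z` misses
the epigraph, so every nearest point lies on the graph of `f` and on the upper semicircle of that
disc, while over `[z 0 - d, z 0 + d]` the graph lies above this semicircle. The semicircle is
`1 / d`-strongly concave and `f` is `(-C)`-strongly convex, so `f` minus the semicircle is strictly
convex there; being nonnegative, it vanishes at most once, and the nearest point is unique.
Hence the reach is at least `1 / C`.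
-/

open Set Metric Filter
open scoped ENNReal NNReal

noncomputable section

/-- The closed ε-neighbourhood of a set: the closure of the union of open ε-balls
centred at points of `E`. -/
def epsNbhd {X : Type*} [MetricSpace X] (E : Set X) (ε : ℝ) : Set X :=
  closure (⋃ x ∈ E, Metric.ball x ε)

/-- `Unp E` is the set of points having a unique nearest point in (the closure of) `E`. -/
def unp {X : Type*} [MetricSpace X] (E : Set X) : Set X :=
  {z | ∃! y, y ∈ closure E ∧ dist z y = Metric.infDist z E}

/-- The local reach of `E` at `y`: the supremum of radii `r` such that the open ball
`B(y, r)` is contained in `Unp E`. -/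
def reachAt {X : Type*} [MetricSpace X] (E : Set X) (y : X) : ℝ≥0∞ :=
  ⨆ (r : ℝ≥0∞) (_ : EMetric.ball y r ⊆ unp E), r

/-- The reach of a set `E` (defined via the closure of `E`). -/
def reach {X : Type*} [MetricSpace X] (E : Set X) : ℝ≥0∞ :=
  ⨅ y ∈ closure E, reachAt E y

/-- The point of the Euclidean plane with coordinates `(a, b)`. -/
def pt (a b : ℝ) : EuclideanSpace ℝ (Fin 2) := (WithLp.equiv 2 (Fin 2 → ℝ)).symm ![a, b]

/-- The polar coordinate map `(x, r) ↦ (r cos x, r sin x)`, viewed as a self-map of the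
Euclidean plane (first coordinate = angle, second coordinate = radius). -/
def polarMap (v : EuclideanSpace ℝ (Fin 2)) : EuclideanSpace ℝ (Fin 2) :=
  pt (v 1 * Real.cos (v 0)) (v 1 * Real.sin (v 0))

/-- A set `Γ ⊆ ℝ²` is a C¹ curve if it is the image of an injective continuously
differentiable map `γ : [0,1] → ℝ²` with nonvanishing derivative. -/
def IsC1Curve (Γ : Set (EuclideanSpace ℝ (Fin 2))) : Prop :=
  ∃ γ : ℝ → EuclideanSpace ℝ (Fin 2),
    Set.InjOn γ (Set.Icc 0 1) ∧
    ContDiffOn ℝ 1 γ (Set.Icc 0 1) ∧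
    (∀ t ∈ Set.Icc (0:ℝ) 1, derivWithin γ (Set.Icc 0 1) t ≠ 0) ∧
    Γ = γ '' Set.Icc 0 1

section Reach

variable {X : Type*} [MetricSpace X] {E : Set X}

lemma IsClosed.mem_unp [ProperSpace X] (hE : IsClosed E) (hne : E.Nonempty) {z : X}
    (huniq : ∀ y₁ ∈ E, ∀ y₂ ∈ E, dist z y₁ = infDist z E → dist z y₂ = infDist z E → y₁ = y₂) :
    z ∈ unp E := by
  obtain ⟨y, hyE, hy⟩ := hE.exists_infDist_eq_dist hne z
  show ∃! y, y ∈ closure E ∧ _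
  rw [hE.closure_eq]
  exact ⟨y, ⟨hyE, hy.symm⟩, fun y' hy' => huniq _ hy'.1 _ hyE hy'.2 hy.symm⟩

lemma ofReal_le_reach {r : ℝ} (h : ∀ z, infDist z E < r → z ∈ unp E) :
    ENNReal.ofReal r ≤ reach E :=
  le_iInf₂ fun y hy => le_iSup₂_of_le (ENNReal.ofReal r) (fun w hw => h w <| by
    rw [← infDist_closure]
    exact (infDist_le_dist_of_mem hy).trans_lt (edist_lt_ofReal.mp hw)) le_rfl

end Reach

def upperSemicircle (a b d t : ℝ) : ℝ := b + √(d ^ 2 - (t - a) ^ 2)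

lemma continuous_upperSemicircle (a b d : ℝ) : Continuous (upperSemicircle a b d) := by
  unfold upperSemicircle; fun_prop

lemma strongConcaveOn_upperSemicircle (a b : ℝ) {d : ℝ} (hd : 0 < d) :
    StrongConcaveOn (Icc (a - d) (a + d)) d⁻¹ (upperSemicircle a b d) := by
  refine ⟨convex_Icc _ _, fun x hx y hy μ ν hμ hν hμν => ?_⟩
  have hw := (convex_Icc (a - d) (a + d)) hx hy hμ hν hμν
  obtain rfl : ν = 1 - μ := by linarith
  simp only [mem_Icc, smul_eq_mul, Real.norm_eq_abs, sq_abs, upperSemicircle] at hx hy hw ⊢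
  rw [show μ * x + (1 - μ) * y - a = μ * (x - a) + (1 - μ) * (y - a) by ring,
    show x - y = (x - a) - (y - a) by ring]
  set u := x - a
  set v := y - a
  set w := μ * u + (1 - μ) * v
  set p := √(d ^ 2 - u ^ 2)
  set q := √(d ^ 2 - v ^ 2)
  set σ := μ * p + (1 - μ) * q
  have hp : p ^ 2 = d ^ 2 - u ^ 2 := Real.sq_sqrt (by nlinarith)
  have hq : q ^ 2 = d ^ 2 - v ^ 2 := Real.sq_sqrt (by nlinarith)
  have hw2 : w ^ 2 ≤ d ^ 2 := by nlinarith
  have hgap : d ^ 2 - w ^ 2 - σ ^ 2 = μ * (1 - μ) * ((u - v) ^ 2 + (p - q) ^ 2) := by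
    simp only [w, σ]; linear_combination (-μ) * hp - (1 - μ) * hq
  have hσ : 0 ≤ σ := by positivity
  set β := √(d ^ 2 - w ^ 2)
  have hβ : β ^ 2 = d ^ 2 - w ^ 2 := Real.sq_sqrt (by linarith)
  have hσβ : σ ≤ β := by
    refine (Real.le_sqrt hσ (by linarith)).mpr ?_
    have : 0 ≤ μ * (1 - μ) * ((u - v) ^ 2 + (p - q) ^ 2) := by positivity
    linarith
  have hβd : β ≤ d := Real.sqrt_le_iff.mpr ⟨hd.le, by nlinarith⟩
  have hgap_le : μ * (1 - μ) * (u - v) ^ 2 ≤ (β - σ) * (2 * d) :=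
    calc μ * (1 - μ) * (u - v) ^ 2 ≤ β ^ 2 - σ ^ 2 := by
          nlinarith [mul_nonneg (mul_nonneg hμ hν) (sq_nonneg (p - q))]
      _ = (β - σ) * (β + σ) := by ring
      _ ≤ (β - σ) * (2 * d) := by gcongr; linarith
  have : μ * (1 - μ) * (d⁻¹ / 2 * (u - v) ^ 2) ≤ β - σ := by
    rw [show μ * (1 - μ) * (d⁻¹ / 2 * (u - v) ^ 2) = μ * (1 - μ) * (u - v) ^ 2 / (2 * d) by
      field_simp, div_le_iff₀ (by positivity)]
    linarith
  simp only [σ] at this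
  linarith

lemma strictConvexOn_sub_upperSemicircle {f : ℝ → ℝ} {C d : ℝ}
    (hf : ConvexOn ℝ univ fun x => f x + C / 2 * x ^ 2) (a b : ℝ) (hd : 0 < d)
    (hCd : C * d < 1) :
    StrictConvexOn ℝ (Icc (a - d) (a + d)) (f - upperSemicircle a b d) := by
  have hf' : StrongConvexOn (Icc (a - d) (a + d)) (-C) f := by
    refine strongConvexOn_iff_convex.mpr ?_
    simpa only [Real.norm_eq_abs, sq_abs, neg_div, neg_mul, sub_neg_eq_add]
      using hf.subset (subset_univ _) (convex_Icc _ _)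
  have hsub : StrongConvexOn (Icc (a - d) (a + d)) (d⁻¹ - C) (f - upperSemicircle a b d) :=
    (hf'.sub (strongConcaveOn_upperSemicircle a b hd)).mono fun r =>
      le_of_eq (by simp only [Pi.add_apply]; ring)
  exact hsub.strictConvexOn (by rwa [sub_pos, ← one_div, lt_div_iff₀ hd])

def epigraph (f : ℝ → ℝ) : Set (EuclideanSpace ℝ (Fin 2)) := {v | f (v 0) ≤ v 1}

lemma dist_sq_eq_fin_two (v w : EuclideanSpace ℝ (Fin 2)) :
    dist v w ^ 2 = (v 0 - w 0) ^ 2 + (v 1 - w 1) ^ 2 := by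
  rw [EuclideanSpace.dist_eq, Fin.sum_univ_two, Real.sq_sqrt (by positivity), Real.dist_eq,
    Real.dist_eq, sq_abs, sq_abs]

@[simp] lemma pt_apply_zero (a b : ℝ) : pt a b 0 = a := rfl

@[simp] lemma pt_apply_one (a b : ℝ) : pt a b 1 = b := rfl

section Epigraph

variable {f : ℝ → ℝ} {z : EuclideanSpace ℝ (Fin 2)} {d : ℝ}

lemma isClosed_epigraph (hf : Continuous f) : IsClosed (epigraph f) :=
  isClosed_le (hf.comp (PiLp.continuous_apply 2 _ 0)) (PiLp.continuous_apply 2 _ 1)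

lemma epigraph_nonempty (f : ℝ → ℝ) : (epigraph f).Nonempty :=
  ⟨pt 0 (f 0), by simp [epigraph]⟩

lemma sq_infDist_epigraph_le {t s : ℝ} (h : f t ≤ s) :
    infDist z (epigraph f) ^ 2 ≤ (z 0 - t) ^ 2 + (z 1 - s) ^ 2 := by
  have hmem : pt t s ∈ epigraph f := by simpa [epigraph] using h
  simpa [dist_sq_eq_fin_two] using pow_le_pow_left₀ infDist_nonneg (infDist_le_dist_of_mem hmem) 2

lemma upperSemicircle_le_of_infDist_epigraph (hf : Continuous f)
    (hzd : infDist z (epigraph f) = d) (hd : 0 < d) :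
    ∀ t ∈ Icc (z 0 - d) (z 0 + d), upperSemicircle (z 0) (z 1) d t ≤ f t := by
  -- inside the interval because the open disc of radius `d` about `z` misses the epigraph,
  -- at its endpoints by continuity
  have hIoo : Ioo (z 0 - d) (z 0 + d) ⊆ {t | upperSemicircle (z 0) (z 1) d t ≤ f t} := by
    intro t ht
    have htd : (z 0 - t) ^ 2 < d ^ 2 := sq_lt_sq' (by linarith [ht.2]) (by linarith [ht.1])
    have hzf : z 1 ≤ f t := by
      by_contra! h
      have := sq_infDist_epigraph_le (z := z) h.le
      rw [hzd, sub_self, zero_pow two_ne_zero, add_zero] at this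
      linarith
    have := hzd ▸ sq_infDist_epigraph_le (z := z) (le_refl (f t))
    show z 1 + √(d ^ 2 - (t - z 0) ^ 2) ≤ f t
    rw [← le_sub_iff_add_le', Real.sqrt_le_iff]
    constructor <;> nlinarith
  rw [← closure_Ioo (by linarith : z 0 - d ≠ z 0 + d)]
  exact closure_minimal hIoo (isClosed_le (continuous_upperSemicircle _ _ _) hf)

lemma eq_upperSemicircle_of_dist_eq_infDist_epigraph (hf : Continuous f)
    (hzd : infDist z (epigraph f) = d) (hd : 0 < d) {y : EuclideanSpace ℝ (Fin 2)}
    (hy : y ∈ epigraph f) (hzy : dist z y = d) :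
    y 0 ∈ Icc (z 0 - d) (z 0 + d) ∧ f (y 0) = upperSemicircle (z 0) (z 1) d (y 0) ∧
      y 1 = upperSemicircle (z 0) (z 1) d (y 0) := by
  have hsq := hzy ▸ dist_sq_eq_fin_two z y
  have hmem : y 0 ∈ Icc (z 0 - d) (z 0 + d) := by
    obtain ⟨h₁, h₂⟩ := abs_le_of_sq_le_sq' (a := y 0 - z 0) (by nlinarith) hd.le
    constructor <;> linarith
  have hlow := upperSemicircle_le_of_infDist_epigraph hf hzd hd _ hmem
  have hy1 : y 1 = upperSemicircle (z 0) (z 1) d (y 0) := by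
    have hsqrt : √(d ^ 2 - (y 0 - z 0) ^ 2) = y 1 - z 1 := by
      rw [show d ^ 2 - (y 0 - z 0) ^ 2 = (y 1 - z 1) ^ 2 by linarith, Real.sqrt_sq]
      have : z 1 + √(d ^ 2 - (y 0 - z 0) ^ 2) ≤ y 1 := hlow.trans hy
      linarith [Real.sqrt_nonneg (d ^ 2 - (y 0 - z 0) ^ 2)]
    rw [upperSemicircle, hsqrt]; ring
  exact ⟨hmem, le_antisymm (hy.trans_eq hy1) hlow, hy1⟩

lemma eq_of_dist_eq_infDist_epigraph {C : ℝ} (hconv : ConvexOn ℝ univ fun x => f x + C / 2 * x ^ 2)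
    (hf : Continuous f) (hzd : infDist z (epigraph f) = d) (hCd : C * d < 1)
    {y₁ y₂ : EuclideanSpace ℝ (Fin 2)} (hy₁ : y₁ ∈ epigraph f) (hy₂ : y₂ ∈ epigraph f)
    (hzy₁ : dist z y₁ = d) (hzy₂ : dist z y₂ = d) : y₁ = y₂ := by
  rcases (hzd ▸ infDist_nonneg : 0 ≤ d).eq_or_lt with hd | hd
  · rw [← hd, dist_eq_zero] at hzy₁ hzy₂
    exact hzy₁.symm.trans hzy₂
  obtain ⟨hI₁, hf₁, hs₁⟩ := eq_upperSemicircle_of_dist_eq_infDist_epigraph hf hzd hd hy₁ hzy₁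
  obtain ⟨hI₂, hf₂, hs₂⟩ := eq_upperSemicircle_of_dist_eq_infDist_epigraph hf hzd hd hy₂ hzy₂
  have hmin : ∀ x, f x = upperSemicircle (z 0) (z 1) d x →
      IsMinOn (f - upperSemicircle (z 0) (z 1) d) (Icc (z 0 - d) (z 0 + d)) x :=
    fun x hx => isMinOn_iff.mpr fun t ht => by
      simpa [hx] using upperSemicircle_le_of_infDist_epigraph hf hzd hd t ht
  have h₀ : y₁ 0 = y₂ 0 := (strictConvexOn_sub_upperSemicircle hconv (z 0) (z 1) hd hCd
    ).eq_of_isMinOn (hmin _ hf₁) (hmin _ hf₂) hI₁ hI₂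
  ext i
  fin_cases i
  · exact h₀
  · simp only [Fin.mk_one, Fin.isValue, hs₁, hs₂, h₀]

end Epigraph

/-- **Fu: the epigraph of a locally Lipschitz semiconvex function has positive reach.**
If `f : ℝ → ℝ` is locally Lipschitz and semiconvex (there is `C > 0` with
`x ↦ f x + (C/2) x²` convex), then its closed epigraph, viewed as a subset of the
Euclidean plane, has positive reach. -/
theorem epigraph_of_semiconvex_has_positive_reach
    (f : ℝ → ℝ) (hlip : LocallyLipschitz f)
    (hsemi : ∃ C > (0:ℝ), ConvexOn ℝ Set.univ (fun x => f x + C / 2 * x ^ 2)) :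
    0 < reach {v : EuclideanSpace ℝ (Fin 2) | f (v 0) ≤ v 1} := by
  obtain ⟨C, hC, hconv⟩ := hsemi
  have hf := hlip.continuous
  refine (ENNReal.ofReal_pos.mpr (inv_pos.mpr hC)).trans_le (ofReal_le_reach fun z hz => ?_)
  refine (isClosed_epigraph hf).mem_unp (epigraph_nonempty f) fun y₁ hy₁ y₂ hy₂ => ?_
  exact eq_of_dist_eq_infDist_epigraph hconv hf rfl ((lt_inv_mul_iff₀ hC).mp (by rwa [mul_one]))
    hy₁ hy₂
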